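/- arXiv:0707.1461 — 3 statements merged into one kernel-verified Lean document; each statement's English description precedes it below -/
import Mathlib

section
/- Let (X, Y) be a random vector with X valued in ℕ and with dom ψ_Y = ℝ. For u ∈ ℝ let X̂_u be the nonnegative integer-valued random variable with law P(X̂_u = k) = exp(−ψ_Y(u)) E[exp(uY) 1_{X=k}], k ∈ ℕ. Then for all real x and y: sup_{u∈ℝ} [ u y + ψ*_{X̂_u}(x) − ψ_Y(u) ] = ψ*_{X,Y}(x, y), where ψ*_{X,Y}(x,y) = sup_{(ξ,u)∈ℝ²} [ ξ x + u y − ψ_{X,Y}(ξ, u) ] and ψ*_{X̂_u}(x) = sup_{ξ∈ℝ} [ ξ x − ψ_{X̂_u}(ξ) ]. -/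
/-!
Tilting by `exp (u Y - ψ_Y(u))` shifts the cumulant generating function:
`ψ_{X̂_u}(ξ) = ψ_{X,Y}(ξ, u) - ψ_Y(u)`, and `ξ` lies in the domain of `ψ_{X̂_u}` exactly when
`(ξ, u)` lies in that of `ψ_{X,Y}`. So the `u`-th term on the left is the supremum over `ξ` of
`ξ x + u y - ψ_{X,Y}(ξ, u)`, and the iterated supremum over `u` and `ξ` is the joint one.
-/

open MeasureTheory ProbabilityTheory Real Filter Topology Set
open scoped ENNReal NNReal

variable {Ω : Type*} [MeasurableSpace Ω]

/-- cumulant generating function -/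
noncomputable def psi (μ : Measure Ω) (Z : Ω → ℝ) (t : ℝ) : ℝ :=
  Real.log (∫ ω, Real.exp (t * Z ω) ∂μ)

/-- effective domain of the cgf -/
def psiDom (μ : Measure Ω) (Z : Ω → ℝ) : Set ℝ :=
  {t | Integrable (fun ω => Real.exp (t * Z ω)) μ}

/-- Fenchel-Legendre transform of the cgf (with `ψ = +∞` outside its domain). -/
noncomputable def psiStar (μ : Measure Ω) (Z : Ω → ℝ) (x : ℝ) : EReal :=
  ⨆ t ∈ psiDom μ Z, ((t * x - psi μ Z t : ℝ) : EReal)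

/-- joint cgf of a pair -/
noncomputable def psi2 (μ : Measure Ω) (Z W : Ω → ℝ) (v : ℝ × ℝ) : ℝ :=
  Real.log (∫ ω, Real.exp (v.1 * Z ω + v.2 * W ω) ∂μ)

def psi2Dom (μ : Measure Ω) (Z W : Ω → ℝ) : Set (ℝ × ℝ) :=
  {v | Integrable (fun ω => Real.exp (v.1 * Z ω + v.2 * W ω)) μ}

noncomputable def psi2Star (μ : Measure Ω) (Z W : Ω → ℝ) (x y : ℝ) : EReal :=
  ⨆ v ∈ psi2Dom μ Z W, ((v.1 * x + v.2 * y - psi2 μ Z W v : ℝ) : EReal)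

/-- the set `R_Z`: interior of the range of `ψ'_Z`. -/
def RSet (μ : Measure Ω) (Z : Ω → ℝ) : Set ℝ :=
  interior {x | ∃ t ∈ interior (psiDom μ Z), HasDerivAt (psi μ Z) x t}

/-- support of the law of an ℕ-valued random variable -/
def nsupport (μ : Measure Ω) (Z : Ω → ℕ) : Set ℕ := {k | μ {ω | Z ω = k} ≠ 0}

/-- span of an ℕ-valued random variable -/
noncomputable def span (μ : Measure Ω) (Z : Ω → ℕ) : ℕ :=
  sSup {m : ℕ | ∃ b : ℕ, nsupport μ Z ⊆ {k | ∃ j : ℕ, k = m * j + b}}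

/-- essential smoothness of a function `f` with effective domain `D` -/
def EssSmooth (f : ℝ × ℝ → ℝ) (D : Set (ℝ × ℝ)) : Prop :=
  (interior D).Nonempty ∧ (∀ v ∈ interior D, DifferentiableAt ℝ f v) ∧
    ∀ c ∈ frontier D, Tendsto (fun v => ‖fderiv ℝ f v‖) (𝓝[interior D] c) atTop

/-- Large deviation principle for a sequence of laws on ℝ with speed `a` and rate `I`. -/
def HasLDP (R : ℕ → Measure ℝ) (a : ℕ → ℝ) (I : ℝ → EReal) : Prop :=
  LowerSemicontinuous I ∧ (∀ x, 0 ≤ I x) ∧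
    ∀ A : Set ℝ,
      -(⨅ x ∈ interior A, I x) ≤
          liminf (fun n => (a n : EReal) * ENNReal.log (R n A)) atTop ∧
        limsup (fun n => (a n : EReal) * ENNReal.log (R n A)) atTop ≤
          -(⨅ x ∈ closure A, I x)

/-- a good rate function has compact sublevel sets -/
def GoodRate (I : ℝ → EReal) : Prop := ∀ c : ℝ, IsCompact {x | I x ≤ (c : EReal)}

/-- tilted measure: the law of `(X̌_ξ, Y̌_ξ)` is that of `(X,Y)` under `tilt μ X ξ`. -/
noncomputable def tilt (μ : Measure Ω) (X : Ω → ℕ) (ξ : ℝ) : Measure Ω :=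
  μ.withDensity fun ω => ENNReal.ofReal (Real.exp (ξ * X ω - psi μ (fun ω' => (X ω' : ℝ)) ξ))

noncomputable def covar (ν : Measure Ω) (f g : Ω → ℝ) : ℝ :=
  ∫ ω, (f ω - ∫ x, f x ∂ν) * (g ω - ∫ x, g x ∂ν) ∂ν

/-- `α²_ξ`: variance of the residual of the linear regression of `Y̌_ξ` on `X̌_ξ`. -/
noncomputable def alpha2 (μ : Measure Ω) (X : Ω → ℕ) (Y : Ω → ℝ) (ξ : ℝ) : ℝ :=
  variance
    (fun ω => (Y ω - ∫ x, Y x ∂(tilt μ X ξ)) -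
      covar (tilt μ X ξ) (fun ω' => (X ω' : ℝ)) Y / variance (fun ω' => (X ω' : ℝ)) (tilt μ X ξ) *
        ((X ω : ℝ) - ∫ x, (X x : ℝ) ∂(tilt μ X ξ)))
    (tilt μ X ξ)

/-- tilt of the measure by `exp(u W − ψ_W(u))`; the law of `X` under `tiltR μ Y u` is the law of
the variable `X̂_u`, i.e. `P(X̂_u = k) = exp(−ψ_Y(u)) E[exp(uY) 1_{X=k}]`. -/
noncomputable def tiltR {Ω : Type*} [MeasurableSpace Ω] (μ : Measure Ω) (W : Ω → ℝ) (u : ℝ) :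
    Measure Ω :=
  μ.withDensity fun ω => ENNReal.ofReal (Real.exp (u * W ω - psi μ W u))

namespace EReal

lemma coe_add_iSup {ι : Sort*} (r : ℝ) (f : ι → EReal) :
    (r : EReal) + ⨆ i, f i = ⨆ i, ((r : EReal) + f i) := by
  refine le_antisymm ?_ (iSup_le fun i => add_le_add le_rfl (le_iSup f i))
  rw [add_comm, ← EReal.le_sub_iff_add_le (Or.inl (coe_ne_bot r)) (Or.inl (coe_ne_top r))]
  refine iSup_le fun i => ?_
  rw [EReal.le_sub_iff_add_le (Or.inl (coe_ne_bot r)) (Or.inl (coe_ne_top r)), add_comm]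
  exact le_iSup (fun j => (r : EReal) + f j) i

lemma iSup_sub_coe {ι : Sort*} (r : ℝ) (f : ι → EReal) :
    (⨆ i, f i) - (r : EReal) = ⨆ i, (f i - (r : EReal)) := by
  simp only [sub_eq_add_neg, add_comm _ ((-r : ℝ) : EReal), ← coe_neg, coe_add_iSup]

end EReal

section Tilt

variable (μ : Measure Ω) {W : Ω → ℝ} (Z : Ω → ℝ)

lemma tiltR_eq_withDensity (u : ℝ) :
    tiltR μ W u = μ.withDensity fun ω =>
      ((Real.toNNReal (Real.exp (u * W ω - psi μ W u)) : ℝ≥0) : ℝ≥0∞) := rfl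

lemma measurable_tiltR_density (hW : Measurable W) (u : ℝ) :
    Measurable fun ω => Real.toNNReal (Real.exp (u * W ω - psi μ W u)) :=
  (((hW.const_mul u).sub_const _).exp).real_toNNReal

lemma integral_tiltR (hW : Measurable W) (u : ℝ) (g : Ω → ℝ) :
    ∫ ω, g ω ∂(tiltR μ W u) = ∫ ω, Real.exp (u * W ω - psi μ W u) * g ω ∂μ := by
  rw [tiltR_eq_withDensity,
    integral_withDensity_eq_integral_smul (measurable_tiltR_density μ hW u)]
  simp [NNReal.smul_def, Real.coe_toNNReal _ (Real.exp_nonneg _)]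

lemma integrable_tiltR_iff (hW : Measurable W) (u : ℝ) (g : Ω → ℝ) :
    Integrable g (tiltR μ W u) ↔
      Integrable (fun ω => Real.exp (u * W ω - psi μ W u) * g ω) μ := by
  rw [tiltR_eq_withDensity,
    integrable_withDensity_iff_integrable_smul (measurable_tiltR_density μ hW u)]
  simp [NNReal.smul_def, Real.coe_toNNReal _ (Real.exp_nonneg _)]

lemma exp_tiltR_density_mul_exp (u ξ : ℝ) :
    (fun ω => Real.exp (u * W ω - psi μ W u) * Real.exp (ξ * Z ω)) =
      fun ω => Real.exp (-psi μ W u) * Real.exp (ξ * Z ω + u * W ω) := by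
  funext ω
  rw [← Real.exp_add, ← Real.exp_add]
  ring_nf

lemma mem_psiDom_tiltR_iff (hW : Measurable W) (u ξ : ℝ) :
    ξ ∈ psiDom (tiltR μ W u) Z ↔ (ξ, u) ∈ psi2Dom μ Z W := by
  rw [psiDom, mem_ofPred_eq, integrable_tiltR_iff μ hW, exp_tiltR_density_mul_exp]
  exact integrable_const_mul_iff (isUnit_iff_ne_zero.2 (Real.exp_ne_zero _)) _

lemma psi_tiltR [NeZero μ] (hW : Measurable W) {u ξ : ℝ} (h : (ξ, u) ∈ psi2Dom μ Z W) :
    psi (tiltR μ W u) Z ξ = psi2 μ Z W (ξ, u) - psi μ W u := by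
  have hpos : 0 < ∫ ω, Real.exp (ξ * Z ω + u * W ω) ∂μ := integral_exp_pos h
  rw [psi, integral_tiltR μ hW, exp_tiltR_density_mul_exp, integral_const_mul,
    Real.log_mul (Real.exp_ne_zero _) hpos.ne', Real.log_exp, psi2]
  ring

lemma coe_add_psiStar_tiltR_sub [NeZero μ] (hW : Measurable W) (x y u : ℝ) :
    ((u * y : ℝ) : EReal) + psiStar (tiltR μ W u) Z x - ((psi μ W u : ℝ) : EReal) =
      ⨆ ξ : ℝ, ⨆ _ : (ξ, u) ∈ psi2Dom μ Z W,
        ((ξ * x + u * y - psi2 μ Z W (ξ, u) : ℝ) : EReal) := by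
  simp only [psiStar, EReal.coe_add_iSup, EReal.iSup_sub_coe]
  refine iSup_congr fun ξ => iSup_congr_Prop (mem_psiDom_tiltR_iff μ Z hW u ξ) fun h => ?_
  rw [psi_tiltR μ Z hW h]
  norm_cast
  ring

end Tilt

theorem legendre_duality_identity_general
    {Ω : Type*} [MeasurableSpace Ω] (μ : Measure Ω) [IsProbabilityMeasure μ]
    (X : Ω → ℕ) (Y : Ω → ℝ) (hY : Measurable Y) :
    ∀ x y : ℝ,
      (⨆ u : ℝ, (((u * y : ℝ) : EReal) +
          psiStar (tiltR μ Y u) (fun ω => (X ω : ℝ)) x - ((psi μ Y u : ℝ) : EReal))) =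
        psi2Star μ (fun ω => (X ω : ℝ)) Y x y := by
  intro x y
  simp only [coe_add_psiStar_tiltR_sub μ _ hY, psi2Star, iSup_prod]
  exact iSup_comm

/-- **Convex duality identity** (Equation (14)):
`sup_u [uy + ψ*_{X̂_u}(x) − ψ_Y(u)] = ψ*_{X,Y}(x, y)`. -/
theorem legendre_duality_identity
    {Ω : Type*} [MeasurableSpace Ω] (μ : Measure Ω) [IsProbabilityMeasure μ]
    (X : Ω → ℕ) (Y : Ω → ℝ) (hX : Measurable X) (hY : Measurable Y)
    (hdomY : psiDom μ Y = Set.univ) :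
    ∀ x y : ℝ,
      (⨆ u : ℝ, (((u * y : ℝ) : EReal) +
          psiStar (tiltR μ Y u) (fun ω => (X ω : ℝ)) x - ((psi μ Y u : ℝ) : EReal))) =
        psi2Star μ (fun ω => (X ω : ℝ)) Y x y :=
  legendre_duality_identity_general μ X Y hY
end

section
/- Under the hypotheses of the local limit lemma — namely Z a non-constant square-integrable nonnegative integer random variable of span 1, (Z^(n)) nonnegative integer random variables of span 1 with ‖φ_{Z^(n)} − φ_Z‖_∞ → 0, E[Z^(n)] = p_n/q_n → p/q = E[Z], Var(Z^(n)) → Var(Z) =: σ_Z², and sup_n E|Z^(n) − p_n/q_n|³ < ∞ — there exist δ ∈ (0, π) and N ∈ ℕ such that for all n ≥ N and all t with |t| < δ: |E[exp(it(Z^(n) − p_n/q_n))]| ≤ 1 − σ_Z² t² / 4. -/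
open MeasureTheory ProbabilityTheory Real Filter Topology Set
open scoped ENNReal NNReal

variable {Ω : Type*} [MeasurableSpace Ω]

/-!
Centre `Z⁽ⁿ⁾` as `Wₙ = Z⁽ⁿ⁾ - pₙ / qₙ`, so that `E Wₙ = 0` and `E Wₙ² = Var Z⁽ⁿ⁾ → σ²`.
The cubic Taylor bound `|e^{ix} - (1 + ix - x² / 2)| ≤ 4 |x|³` then gives
`|E e^{itWₙ}| ≤ 1 - t² E Wₙ² / 2 + 4 |t|³ supₙ E|Wₙ|³`, and for small `|t|` the cubic error
is absorbed by part of the quadratic gain. The gain is real because `σ² > 0`: a variable with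
zero variance is almost surely constant, which `Z` is not.
-/

open Complex in
lemma norm_exp_I_mul_ofReal_sub_taylor_le (x : ℝ) :
    ‖exp (I * x) - (1 + I * x - x ^ 2 / 2)‖ ≤ 4 * |x| ^ 3 := by
  rcases le_or_gt |x| 1 with hx | hx
  · have hIx : ‖I * x‖ = |x| := by simp
    have h := Complex.exp_bound (x := I * x) (hIx.trans_le hx) (n := 3) (by norm_num)
    have hsum : ∑ m ∈ Finset.range 3, (I * x) ^ m / (m.factorial : ℂ) = 1 + I * x - x ^ 2 / 2 := by
      simp only [Finset.sum_range_succ, Finset.sum_range_zero, mul_pow, I_sq, Nat.factorial]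
      push_cast
      ring
    rw [hsum, hIx] at h
    refine h.trans ?_
    rw [mul_comm]
    gcongr
    norm_num [Nat.factorial]
  · have hpoly : ‖(1 : ℂ) + I * x - x ^ 2 / 2‖ ≤ 1 + |x| + x ^ 2 / 2 := by
      refine (norm_sub_le _ _).trans ?_
      gcongr
      · exact (norm_add_le _ _).trans (by simp)
      · simp [← Complex.ofReal_pow]
    calc ‖exp (I * x) - (1 + I * x - x ^ 2 / 2)‖
        ≤ ‖exp (I * x)‖ + ‖(1 : ℂ) + I * x - x ^ 2 / 2‖ := norm_sub_le _ _
      _ ≤ 1 + (1 + |x| + x ^ 2 / 2) := by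
        rw [norm_exp_I_mul_ofReal]; gcongr
      _ ≤ 4 * |x| ^ 3 := by nlinarith [sq_abs x, pow_le_pow_right₀ hx.le (show 2 ≤ 3 by norm_num)]

open Complex in
lemma norm_integral_exp_I_mul_sub_le {μ : Measure Ω} [IsProbabilityMeasure μ] {W : Ω → ℝ}
    (hW : MemLp W 3 μ) (hW0 : ∫ ω, W ω ∂μ = 0) (t : ℝ) :
    ‖∫ ω, exp (I * t * W ω) ∂μ - (1 - t ^ 2 * (∫ ω, W ω ^ 2 ∂μ) / 2)‖ ≤
      4 * |t| ^ 3 * ∫ ω, |W ω| ^ 3 ∂μ := by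
  have hW1 : Integrable W μ := memLp_one_iff_integrable.1 (hW.mono_exponent (by norm_num))
  have hW2 : Integrable (fun ω => W ω ^ 2) μ := (hW.mono_exponent (by norm_num)).integrable_sq
  have hW3 : Integrable (fun ω => |W ω| ^ 3) μ := by
    simpa only [Real.norm_eq_abs] using hW.integrable_norm_pow' (p := 3)
  have hexp : Integrable (fun ω => exp (I * t * W ω)) μ := by
    refine Integrable.of_bound (C := 1) ?_ (ae_of_all _ fun ω => ?_)
    · exact (by fun_prop : Continuous fun x : ℝ => exp (I * t * x)).comp_aestronglyMeasurable hW.1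
    · rw [mul_assoc, ← ofReal_mul, norm_exp_I_mul_ofReal]
  have hlin : Integrable (fun ω => I * t * W ω) μ := hW1.ofReal.const_mul _
  have hquad : Integrable (fun ω => (t : ℂ) ^ 2 * W ω ^ 2 / 2) μ := by
    simpa only [← ofReal_pow] using (hW2.ofReal.const_mul _).div_const _
  have hpoly : Integrable (fun ω => 1 + I * t * W ω) μ := (integrable_const 1).add hlin
  have htaylor : Integrable (fun ω => 1 + I * t * W ω - (t : ℂ) ^ 2 * W ω ^ 2 / 2) μ :=
    hpoly.sub hquad
  have hmean : ∫ ω, (1 + I * t * W ω - (t : ℂ) ^ 2 * W ω ^ 2 / 2 : ℂ) ∂μ =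
      1 - t ^ 2 * (∫ ω, W ω ^ 2 ∂μ) / 2 := by
    rw [integral_sub hpoly hquad, integral_add (integrable_const 1) hlin,
      integral_const_mul, integral_div, integral_const_mul]
    simp only [← ofReal_pow, integral_complex_ofReal, hW0, integral_const, probReal_univ,
      one_smul, ofReal_zero]
    ring
  rw [← hmean, ← integral_sub hexp htaylor, ← integral_const_mul]
  refine norm_integral_le_of_norm_le (hW3.const_mul _) (ae_of_all _ fun ω => ?_)
  calc ‖exp (I * t * W ω) - (1 + I * t * W ω - (t : ℂ) ^ 2 * W ω ^ 2 / 2)‖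
      = ‖exp (I * ↑(t * W ω)) - (1 + I * ↑(t * W ω) - ↑(t * W ω) ^ 2 / 2)‖ := by
        push_cast; ring_nf
    _ ≤ 4 * |t * W ω| ^ 3 := norm_exp_I_mul_ofReal_sub_taylor_le _
    _ = 4 * |t| ^ 3 * |W ω| ^ 3 := by rw [abs_mul, mul_pow, mul_assoc]

open Complex in
lemma exists_norm_integral_exp_I_mul_le {μ : Measure Ω} [IsProbabilityMeasure μ]
    {W : ℕ → Ω → ℝ} (hW : ∀ n, MemLp (W n) 3 μ) (hW0 : ∀ n, ∫ ω, W n ω ∂μ = 0)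
    {σ2 : ℝ} (hσ2 : 0 < σ2) (hvar : Tendsto (fun n => ∫ ω, W n ω ^ 2 ∂μ) atTop (𝓝 σ2))
    {C : ℝ} (hC : ∀ n, ∫ ω, |W n ω| ^ 3 ∂μ ≤ C) :
    ∃ δ > 0, ∀ᶠ n in atTop, ∀ t : ℝ, |t| < δ →
      ‖∫ ω, exp (I * t * W n ω) ∂μ‖ ≤ 1 - σ2 * t ^ 2 / 4 := by
  have hC0 : 0 ≤ C := (integral_nonneg fun ω => by positivity).trans (hC 0)
  -- `|t| < min 1 (1 / σ2)` keeps `1 - t ^ 2 E[W²] / 2` nonnegative; `|t| < σ2 / (32 (C + 1))` makes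
  -- the cubic error at most `σ2 t ^ 2 / 8`, leaving `σ2 t ^ 2 / 4` of the quadratic gain.
  refine ⟨min 1 (min (1 / σ2) (σ2 / (32 * (C + 1)))), by positivity, ?_⟩
  filter_upwards [hvar.eventually (Ioo_mem_nhds (by linarith : 3 * σ2 / 4 < σ2)
    (by linarith : σ2 < 2 * σ2))] with n ⟨hlow, hupp⟩ t ht
  set v := ∫ ω, W n ω ^ 2 ∂μ
  simp only [lt_min_iff] at ht
  obtain ⟨ht1, htσ, htC⟩ := ht
  have hquad : t ^ 2 * v / 2 ≤ 1 := by
    have htσ' : |t| * σ2 < 1 := by rwa [lt_div_iff₀ hσ2] at htσ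
    nlinarith [sq_abs t, abs_nonneg t]
  have hcubic : 4 * |t| ^ 3 * C ≤ σ2 * t ^ 2 / 8 := by
    rw [lt_div_iff₀ (by positivity)] at htC
    have h : 4 * |t| * C ≤ σ2 / 8 := by nlinarith [abs_nonneg t]
    calc 4 * |t| ^ 3 * C = (4 * |t| * C) * t ^ 2 := by rw [← sq_abs t]; ring
      _ ≤ σ2 / 8 * t ^ 2 := by gcongr
      _ = σ2 * t ^ 2 / 8 := by ring
  calc ‖∫ ω, exp (I * t * W n ω) ∂μ‖
      ≤ ‖((1 - t ^ 2 * v / 2 : ℝ) : ℂ)‖ + 4 * |t| ^ 3 * ∫ ω, |W n ω| ^ 3 ∂μ := by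
        refine (norm_le_norm_add_norm_sub' _ ((1 - t ^ 2 * v / 2 : ℝ) : ℂ)).trans ?_
        gcongr
        push_cast
        exact norm_integral_exp_I_mul_sub_le (hW n) (hW0 n) t
    _ ≤ (1 - t ^ 2 * v / 2) + 4 * |t| ^ 3 * C := by
        rw [norm_real, norm_of_nonneg (by linarith)]
        gcongr
        exact hC n
    _ ≤ 1 - σ2 * t ^ 2 / 4 := by nlinarith [sq_nonneg t]

lemma variance_natCast_pos {μ : Measure Ω} [IsProbabilityMeasure μ] {Z : Ω → ℕ}
    (hZ : MemLp (fun ω => (Z ω : ℝ)) 2 μ) (hnc : ¬ ∃ c : ℕ, μ {ω | Z ω = c} = 1) :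
    0 < variance (fun ω => (Z ω : ℝ)) μ := by
  refine (variance_nonneg _ _).lt_of_ne fun h => hnc ?_
  have hconst := ae_eq_integral_of_variance_eq_zero hZ h.symm
  obtain ⟨ω₀, hω₀⟩ := hconst.exists
  have hae : ∀ᵐ ω ∂μ, Z ω = Z ω₀ := by
    filter_upwards [hconst] with ω hω
    exact_mod_cast hω.trans hω₀.symm
  refine ⟨Z ω₀, ?_⟩
  have hset : {ω | Z ω = Z ω₀} =ᵐ[μ] (univ : Set Ω) := ae_eq_univ.2 (mem_ae_iff.1 hae)
  rw [measure_congr hset, measure_univ]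

lemma memLp_of_lintegral_ofReal_abs_pow_le {μ : Measure Ω} {W : Ω → ℝ} {p : ℕ} (hp : p ≠ 0)
    (hW : AEStronglyMeasurable W μ) {C : ℝ≥0∞} (hC : C ≠ ∞)
    (hint : ∫⁻ ω, ENNReal.ofReal (|W ω| ^ p) ∂μ ≤ C) :
    MemLp W p μ := by
  have hpow : Integrable (fun ω => ‖W ω‖ ^ ((p : ℝ≥0∞).toReal)) μ := by
    simp only [ENNReal.toReal_natCast, rpow_natCast, Real.norm_eq_abs]
    refine ⟨by fun_prop, ?_⟩
    exact (hasFiniteIntegral_iff_ofReal (ae_of_all _ fun ω => by positivity)).2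
      (hint.trans_lt hC.lt_top)
  exact (integrable_norm_rpow_iff hW (by simpa using hp) (by simp)).1 hpow

lemma integral_abs_pow_le_of_lintegral_le {μ : Measure Ω} {W : Ω → ℝ} {p : ℕ}
    (hW : AEStronglyMeasurable W μ) {C : ℝ≥0∞} (hC : C ≠ ∞)
    (hint : ∫⁻ ω, ENNReal.ofReal (|W ω| ^ p) ∂μ ≤ C) :
    ∫ ω, |W ω| ^ p ∂μ ≤ C.toReal := by
  rw [integral_eq_lintegral_of_nonneg_ae (ae_of_all _ fun ω => by positivity) (by fun_prop)]
  exact ENNReal.toReal_mono hC hint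

theorem charFun_quadratic_bound_general
    {Ω : Type*} [MeasurableSpace Ω] (μ : Measure Ω) [IsProbabilityMeasure μ]
    (Z : Ω → ℕ) (Zn : ℕ → Ω → ℕ)
    (pn qn : ℕ → ℕ)
    (hZn : ∀ n, Measurable (Zn n))
    (hnc : ¬ ∃ c : ℕ, μ {ω | Z ω = c} = 1)
    (hL2 : MemLp (fun ω => (Z ω : ℝ)) 2 μ)
    (hmeann : ∀ n, ∫ ω, (Zn n ω : ℝ) ∂μ = (pn n : ℝ) / qn n)
    (hvar : Tendsto (fun n => variance (fun ω => (Zn n ω : ℝ)) μ) atTop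
      (𝓝 (variance (fun ω => (Z ω : ℝ)) μ)))
    (hthird : ∃ C : ℝ≥0∞, C ≠ ⊤ ∧ ∀ n,
      (∫⁻ ω, ENNReal.ofReal (|(Zn n ω : ℝ) - (pn n : ℝ) / qn n| ^ 3) ∂μ) ≤ C) :
    ∃ δ : ℝ, 0 < δ ∧ δ < π ∧ ∃ N : ℕ, ∀ n ≥ N, ∀ t : ℝ, |t| < δ →
      norm (∫ ω, Complex.exp
          (Complex.I * (t : ℂ) * (((Zn n ω : ℝ) - (pn n : ℝ) / qn n : ℝ) : ℂ)) ∂μ) ≤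
        1 - variance (fun ω => (Z ω : ℝ)) μ * t ^ 2 / 4 := by
  obtain ⟨C, hC, hthird⟩ := hthird
  set W : ℕ → Ω → ℝ := fun n ω => (Zn n ω : ℝ) - (pn n : ℝ) / qn n
  have hZnm : ∀ n, Measurable (fun ω => (Zn n ω : ℝ)) := fun n =>
    Measurable.of_discrete.comp (hZn n)
  have hWm : ∀ n, AEStronglyMeasurable (W n) μ := fun n =>
    ((hZnm n).sub_const _).aestronglyMeasurable
  have hW3 : ∀ n, MemLp (W n) 3 μ := fun n =>
    memLp_of_lintegral_ofReal_abs_pow_le three_ne_zero (hWm n) hC (hthird n)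
  have hW0 : ∀ n, ∫ ω, W n ω ∂μ = 0 := fun n => by
    have hZni : Integrable (fun ω => (Zn n ω : ℝ)) μ := by
      simpa [W, sub_eq_add_neg] using (hW3 n).integrable (by norm_num)
    simp only [W]
    rw [integral_sub hZni (integrable_const _), hmeann n]
    simp
  have hvarW : ∀ n, ∫ ω, W n ω ^ 2 ∂μ = variance (fun ω => (Zn n ω : ℝ)) μ := fun n => by
    rw [variance_eq_integral (hZnm n).aemeasurable, hmeann n]
  obtain ⟨δ, hδ, hbound⟩ := exists_norm_integral_exp_I_mul_le hW3 hW0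
    (variance_natCast_pos hL2 hnc) (by simpa only [hvarW] using hvar)
    (fun n => integral_abs_pow_le_of_lintegral_le (hWm n) hC (hthird n))
  obtain ⟨N, hN⟩ := eventually_atTop.1 hbound
  refine ⟨min δ 1, by positivity, (min_le_right _ _).trans_lt (by linarith [pi_gt_three]), N,
    fun n hn t ht => hN n hn t (ht.trans_le (min_le_left _ _))⟩

/-- **Quadratic bound on the centered characteristic functions** (step in the proof of the
local limit lemma): there exist `δ ∈ (0,π)` and `N` such that for `n ≥ N` and `|t| < δ`,
`|E[e^{it(Z^(n) − p_n/q_n)}]| ≤ 1 − σ_Z² t²/4`. -/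
theorem charFun_quadratic_bound
    {Ω : Type*} [MeasurableSpace Ω] (μ : Measure Ω) [IsProbabilityMeasure μ]
    (Z : Ω → ℕ) (Zn : ℕ → Ω → ℕ)
    (p q : ℕ) (pn qn : ℕ → ℕ)
    (hZ : Measurable Z) (hZn : ∀ n, Measurable (Zn n))
    (hp : 0 < p) (hq : 0 < q) (hpn : ∀ n, 0 < pn n) (hqn : ∀ n, 0 < qn n)
    (hnc : ¬ ∃ c : ℕ, μ {ω | Z ω = c} = 1)
    (hL2 : MemLp (fun ω => (Z ω : ℝ)) 2 μ)
    (hspanZ : span μ Z = 1) (hspanZn : ∀ n, span μ (Zn n) = 1)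
    (hcf : Tendsto (fun n => ⨆ t : ℝ, norm
        ((∫ ω, Complex.exp ((t : ℂ) * (Zn n ω : ℂ) * Complex.I) ∂μ) -
          ∫ ω, Complex.exp ((t : ℂ) * (Z ω : ℂ) * Complex.I) ∂μ)) atTop (𝓝 0))
    (hmean : ∫ ω, (Z ω : ℝ) ∂μ = (p : ℝ) / q)
    (hmeann : ∀ n, ∫ ω, (Zn n ω : ℝ) ∂μ = (pn n : ℝ) / qn n)
    (hconv : Tendsto (fun n => (pn n : ℝ) / qn n) atTop (𝓝 ((p : ℝ) / q)))
    (hvar : Tendsto (fun n => variance (fun ω => (Zn n ω : ℝ)) μ) atTop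
      (𝓝 (variance (fun ω => (Z ω : ℝ)) μ)))
    (hthird : ∃ C : ℝ≥0∞, C ≠ ⊤ ∧ ∀ n,
      (∫⁻ ω, ENNReal.ofReal (|(Zn n ω : ℝ) - (pn n : ℝ) / qn n| ^ 3) ∂μ) ≤ C) :
    ∃ δ : ℝ, 0 < δ ∧ δ < π ∧ ∃ N : ℕ, ∀ n ≥ N, ∀ t : ℝ, |t| < δ →
      norm (∫ ω, Complex.exp
          (Complex.I * (t : ℂ) * (((Zn n ω : ℝ) - (pn n : ℝ) / qn n : ℝ) : ℂ)) ∂μ) ≤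
        1 - variance (fun ω => (Z ω : ℝ)) μ * t ^ 2 / 4 :=
  charFun_quadratic_bound_general μ Z Zn pn qn hZn hnc hL2 hmeann hvar hthird
end

section
/- (Occupancy problem, joint cumulant generating function.) Let λ > 0, let X be a Poisson random variable with parameter λ, and let Y = 1_{X=0}. Then for all (x, y) ∈ ℝ²: ψ_X(x) = −λ + λe^x; for all positive p, q: ψ*_X(p/q) = (p/q) log(p/(qλ)) + λ − p/q; and ψ_{X,Y}(x, y) = −λ + log( e^{λ e^x} − 1 + e^y ). Moreover ψ_{X,Y} is essentially smooth. -/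
open MeasureTheory ProbabilityTheory Real Filter Topology Set
open scoped ENNReal NNReal

variable {Ω : Type*} [MeasurableSpace Ω]

lemma exp_tsum (y : ℝ) : ∑' k : ℕ, y ^ k / (k.factorial : ℝ) = Real.exp y := by
  conv_rhs => rw [Real.exp_eq_exp_ℝ, NormedSpace.exp_eq_tsum_div]

lemma hpt (lam x : ℝ) (k : ℕ) :
    Real.exp (-lam) * lam ^ k / (k.factorial : ℝ) * Real.exp (x * k) =
      Real.exp (-lam) * ((lam * Real.exp x) ^ k / (k.factorial : ℝ)) := by
  have h : Real.exp (x * k) = (Real.exp x) ^ k := by rw [← Real.exp_nat_mul, mul_comm]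
  rw [h, mul_pow]; ring

lemma sum1 (lam x : ℝ) :
    ∑' k : ℕ, Real.exp (-lam) * lam ^ k / (k.factorial : ℝ) * Real.exp (x * k) =
      Real.exp (-lam) * Real.exp (lam * Real.exp x) := by
  rw [tsum_congr (hpt lam x), tsum_mul_left, exp_tsum]

lemma summ1 (lam x : ℝ) :
    Summable (fun k : ℕ => Real.exp (-lam) * lam ^ k / (k.factorial : ℝ) * Real.exp (x * k)) :=
  ((Real.summable_pow_div_factorial (lam * Real.exp x)).mul_left (Real.exp (-lam))).congr
    (fun k => (hpt lam x k).symm)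

lemma summ2 {lam : ℝ} (hlam : 0 ≤ lam) (x y : ℝ) :
    Summable (fun k : ℕ => Real.exp (-lam) * lam ^ k / (k.factorial : ℝ) *
      Real.exp (x * k + y * (if k = 0 then (1 : ℝ) else 0))) := by
  refine Summable.of_nonneg_of_le (fun k => ?_) (fun k => ?_)
    ((Real.summable_pow_div_factorial (lam * Real.exp x)).mul_left
      (Real.exp (-lam) * Real.exp |y|))
  · exact mul_nonneg (div_nonneg (mul_nonneg (Real.exp_pos _).le (pow_nonneg hlam k))
      (Nat.cast_nonneg _)) (Real.exp_pos _).le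
  · have hb : x * k + y * (if k = 0 then (1 : ℝ) else 0) ≤ x * k + |y| := by
      have : y * (if k = 0 then (1 : ℝ) else 0) ≤ |y| := by
        split <;> simp [le_abs_self, abs_nonneg]
      linarith
    have h1 : Real.exp (x * k + y * (if k = 0 then (1 : ℝ) else 0)) ≤
        Real.exp (x * k) * Real.exp |y| := by
      rw [← Real.exp_add]; exact Real.exp_le_exp.mpr (by linarith)
    have h2 : Real.exp (-lam) * lam ^ k / (k.factorial : ℝ) *
        (Real.exp (x * k) * Real.exp |y|) =
        Real.exp (-lam) * Real.exp |y| * ((lam * Real.exp x) ^ k / (k.factorial : ℝ)) := by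
      calc Real.exp (-lam) * lam ^ k / (k.factorial : ℝ) *
            (Real.exp (x * k) * Real.exp |y|)
          = Real.exp (-lam) * lam ^ k / (k.factorial : ℝ) * Real.exp (x * k) *
            Real.exp |y| := by ring
        _ = Real.exp (-lam) * ((lam * Real.exp x) ^ k / (k.factorial : ℝ)) *
            Real.exp |y| := by rw [hpt lam x k]
        _ = Real.exp (-lam) * Real.exp |y| *
            ((lam * Real.exp x) ^ k / (k.factorial : ℝ)) := by ring
    calc Real.exp (-lam) * lam ^ k / (k.factorial : ℝ) *
          Real.exp (x * k + y * (if k = 0 then (1 : ℝ) else 0))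
        ≤ Real.exp (-lam) * lam ^ k / (k.factorial : ℝ) *
          (Real.exp (x * k) * Real.exp |y|) := by
          refine mul_le_mul_of_nonneg_left h1 ?_
          exact div_nonneg (mul_nonneg (Real.exp_pos _).le (pow_nonneg hlam k))
            (Nat.cast_nonneg _)
      _ = Real.exp (-lam) * Real.exp |y| * ((lam * Real.exp x) ^ k / (k.factorial : ℝ)) := h2

lemma sum2 {lam : ℝ} (hlam : 0 ≤ lam) (x y : ℝ) :
    ∑' k : ℕ, Real.exp (-lam) * lam ^ k / (k.factorial : ℝ) *
      Real.exp (x * k + y * (if k = 0 then (1 : ℝ) else 0)) =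
      Real.exp (-lam) * (Real.exp (lam * Real.exp x) - 1 + Real.exp y) := by
  set f : ℕ → ℝ := fun k => Real.exp (-lam) * lam ^ k / (k.factorial : ℝ) *
      Real.exp (x * k + y * (if k = 0 then (1 : ℝ) else 0)) with hf
  set h : ℕ → ℝ := fun k => Real.exp (-lam) * ((lam * Real.exp x) ^ k / (k.factorial : ℝ))
    with hh
  have hsf : Summable f := summ2 hlam x y
  have hsh : Summable h := (Real.summable_pow_div_factorial _).mul_left _
  have hfh : ∀ k : ℕ, f (k + 1) = h (k + 1) := by
    intro k
    have : ((k + 1 : ℕ) : ℝ) ≠ 0 := by positivity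
    simp only [hf, hh, Nat.succ_ne_zero, if_false, mul_zero, add_zero]
    exact hpt lam x (k + 1)
  have hf0 : f 0 = Real.exp (-lam) * Real.exp y := by
    simp [hf]
  have hh0 : h 0 = Real.exp (-lam) := by simp [hh]
  have hsumh : ∑' k, h k = Real.exp (-lam) * Real.exp (lam * Real.exp x) := by
    rw [hh, tsum_mul_left, exp_tsum]
  have e1 := Summable.tsum_eq_zero_add hsf
  have e2 := Summable.tsum_eq_zero_add hsh
  rw [tsum_congr hfh] at e1
  rw [hsumh] at e2
  rw [e1, hf0, hh0] at *
  linarith [e2]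

lemma poisson_int {Ω : Type*} [MeasurableSpace Ω] (μ : Measure Ω) [IsProbabilityMeasure μ]
    {lam : ℝ} (hlam : 0 ≤ lam) (X : Ω → ℕ) (hX : Measurable X)
    (hpois : ∀ k : ℕ, μ {ω | X ω = k} =
      ENNReal.ofReal (Real.exp (-lam) * lam ^ k / k.factorial))
    (g : ℕ → ℝ) (hg0 : ∀ k, 0 ≤ g k)
    (hgs : Summable (fun k => Real.exp (-lam) * lam ^ k / (k.factorial : ℝ) * g k)) :
    Integrable (fun ω => g (X ω)) μ ∧
    ∫ ω, g (X ω) ∂μ = ∑' k, Real.exp (-lam) * lam ^ k / (k.factorial : ℝ) * g k := by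
  have hw : ∀ k : ℕ, 0 ≤ Real.exp (-lam) * lam ^ k / (k.factorial : ℝ) * g k := by
    intro k
    exact mul_nonneg (div_nonneg (mul_nonneg (Real.exp_pos _).le (pow_nonneg hlam k))
      (Nat.cast_nonneg _)) (hg0 k)
  have hmeas : Measurable (fun ω => g (X ω)) := measurable_from_nat.comp hX
  have hL : ∫⁻ ω, ENNReal.ofReal (g (X ω)) ∂μ =
      ENNReal.ofReal (∑' k, Real.exp (-lam) * lam ^ k / (k.factorial : ℝ) * g k) := by
    calc ∫⁻ ω, ENNReal.ofReal (g (X ω)) ∂μ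
        = ∫⁻ k, ENNReal.ofReal (g k) ∂(μ.map X) := (lintegral_map (f := fun k => ENNReal.ofReal (g k)) measurable_from_nat hX).symm
      _ = ∑' k, ENNReal.ofReal (g k) * (μ.map X) {k} := lintegral_countable' _
      _ = ∑' k, ENNReal.ofReal (Real.exp (-lam) * lam ^ k / (k.factorial : ℝ) * g k) := by
          refine tsum_congr fun k => ?_
          rw [Measure.map_apply hX (measurableSet_singleton k)]
          have h1 : X ⁻¹' {k} = {ω | X ω = k} := rfl
          rw [h1, hpois k, ← ENNReal.ofReal_mul (hg0 k), mul_comm (g k)]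
      _ = ENNReal.ofReal (∑' k, Real.exp (-lam) * lam ^ k / (k.factorial : ℝ) * g k) :=
          (ENNReal.ofReal_tsum_of_nonneg hw hgs).symm
  constructor
  · refine ⟨hmeas.aestronglyMeasurable, ?_⟩
    rw [hasFiniteIntegral_iff_ofReal (ae_of_all _ fun ω => hg0 _), hL]
    exact ENNReal.ofReal_lt_top
  · rw [integral_eq_lintegral_of_nonneg_ae (ae_of_all _ fun ω => hg0 _)
      hmeas.aestronglyMeasurable, hL, ENNReal.toReal_ofReal (tsum_nonneg hw)]



/-- **Occupancy problem, joint cumulant generating function**: for `X ~ Poisson(λ)` and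
`Y = 1_{X=0}`, one has `ψ_X(x) = −λ + λeˣ`, `ψ*_X(p/q) = (p/q) log(p/(qλ)) + λ − p/q`,
`ψ_{X,Y}(x,y) = −λ + log(e^{λeˣ} − 1 + e^y)`, and `ψ_{X,Y}` is essentially smooth. -/
theorem occupancy_cgf
    {Ω : Type*} [MeasurableSpace Ω] (μ : Measure Ω) [IsProbabilityMeasure μ]
    (lam : ℝ) (hlam : 0 < lam) (X : Ω → ℕ) (hX : Measurable X)
    (hpois : ∀ k : ℕ, μ {ω | X ω = k} =
      ENNReal.ofReal (Real.exp (-lam) * lam ^ k / k.factorial)) :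
    (∀ x : ℝ, psi μ (fun ω => (X ω : ℝ)) x = -lam + lam * Real.exp x) ∧
    (∀ p q : ℕ, 0 < p → 0 < q →
      psiStar μ (fun ω => (X ω : ℝ)) ((p : ℝ) / q) =
        (((p : ℝ) / q * Real.log ((p : ℝ) / (q * lam)) + lam - (p : ℝ) / q : ℝ) : EReal)) ∧
    (∀ x y : ℝ,
      psi2 μ (fun ω => (X ω : ℝ)) (fun ω => if X ω = 0 then (1 : ℝ) else 0) (x, y) =
        -lam + Real.log (Real.exp (lam * Real.exp x) - 1 + Real.exp y)) ∧
    EssSmooth (psi2 μ (fun ω => (X ω : ℝ)) (fun ω => if X ω = 0 then (1 : ℝ) else 0))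
      (psi2Dom μ (fun ω => (X ω : ℝ)) (fun ω => if X ω = 0 then (1 : ℝ) else 0)) := by
  have hlam0 : (0 : ℝ) ≤ lam := hlam.le
  have hpsi : ∀ x : ℝ, psi μ (fun ω => (X ω : ℝ)) x = -lam + lam * Real.exp x := by
    intro x
    have h := poisson_int μ hlam0 X hX hpois (fun k => Real.exp (x * k))
      (fun k => (Real.exp_pos _).le) (summ1 lam x)
    have hint : ∫ ω, Real.exp (x * (X ω : ℝ)) ∂μ =
        Real.exp (-lam) * Real.exp (lam * Real.exp x) := by
      rw [← sum1 lam x]; exact h.2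
    unfold psi
    rw [hint, Real.log_mul (Real.exp_ne_zero _) (Real.exp_ne_zero _), Real.log_exp,
      Real.log_exp]
  have hdom : psiDom μ (fun ω => (X ω : ℝ)) = univ :=
    eq_univ_of_forall fun t =>
      (poisson_int μ hlam0 X hX hpois (fun k => Real.exp (t * k))
        (fun k => (Real.exp_pos _).le) (summ1 lam t)).1
  have hpsi2 : ∀ x y : ℝ,
      psi2 μ (fun ω => (X ω : ℝ)) (fun ω => if X ω = 0 then (1 : ℝ) else 0) (x, y) =
        -lam + Real.log (Real.exp (lam * Real.exp x) - 1 + Real.exp y) := by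
    intro x y
    have h := poisson_int μ hlam0 X hX hpois
      (fun k => Real.exp (x * k + y * (if k = 0 then (1 : ℝ) else 0)))
      (fun k => (Real.exp_pos _).le) (summ2 hlam0 x y)
    have hint : ∫ ω, Real.exp (x * (X ω : ℝ) + y * (if X ω = 0 then (1 : ℝ) else 0)) ∂μ =
        Real.exp (-lam) * (Real.exp (lam * Real.exp x) - 1 + Real.exp y) := by
      rw [← sum2 hlam0 x y]; exact h.2
    have hT : 0 < Real.exp (lam * Real.exp x) - 1 + Real.exp y := by
      have h1 := Real.one_le_exp (show 0 ≤ lam * Real.exp x by positivity)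
      linarith [Real.exp_pos y]
    show Real.log (∫ ω, Real.exp (x * (X ω : ℝ) +
        y * (if X ω = 0 then (1 : ℝ) else 0)) ∂μ) = _
    rw [hint, Real.log_mul (Real.exp_ne_zero _) (ne_of_gt hT), Real.log_exp]
  refine ⟨hpsi, ?_, hpsi2, ?_⟩
  · intro p q hp hq
    have hr : (0 : ℝ) < (p : ℝ) / q := div_pos (Nat.cast_pos.mpr hp) (Nat.cast_pos.mpr hq)
    set r : ℝ := (p : ℝ) / q with hrdef
    have hrl : (0 : ℝ) < r / lam := div_pos hr hlam
    have hex : lam * Real.exp (Real.log (r / lam)) = r := by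
      rw [Real.exp_log hrl]; field_simp
    have hlog : Real.log ((p : ℝ) / ((q : ℝ) * lam)) = Real.log (r / lam) := by
      rw [hrdef, div_div]
    unfold psiStar
    rw [hdom, iSup_univ, hlog]
    apply le_antisymm
    · refine iSup_le fun s => ?_
      refine EReal.coe_le_coe_iff.mpr ?_
      rw [hpsi s]
      have h2 : (s - Real.log (r / lam)) + 1 ≤ Real.exp (s - Real.log (r / lam)) :=
        Real.add_one_le_exp _
      have h3 : lam * Real.exp s = r * Real.exp (s - Real.log (r / lam)) := by
        have h5 : Real.exp s = Real.exp (Real.log (r / lam)) *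
            Real.exp (s - Real.log (r / lam)) := by
          rw [← Real.exp_add]; congr 1; ring
        rw [h5, ← mul_assoc, hex]
      have h4 : r * ((s - Real.log (r / lam)) + 1) ≤ r * Real.exp (s - Real.log (r / lam)) :=
        mul_le_mul_of_nonneg_left h2 hr.le
      calc s * r - (-lam + lam * Real.exp s)
          = s * r + lam - r * Real.exp (s - Real.log (r / lam)) := by rw [h3]; ring
        _ ≤ s * r + lam - r * ((s - Real.log (r / lam)) + 1) := by linarith [h4]
        _ = r * Real.log (r / lam) + lam - r := by ring
    · refine le_iSup_of_le (Real.log (r / lam)) ?_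
      refine EReal.coe_le_coe_iff.mpr (le_of_eq ?_)
      rw [hpsi, hex]; ring
  · have hdom2 : psi2Dom μ (fun ω => (X ω : ℝ))
        (fun ω => if X ω = 0 then (1 : ℝ) else 0) = univ :=
      eq_univ_of_forall fun v =>
        (poisson_int μ hlam0 X hX hpois
          (fun k => Real.exp (v.1 * k + v.2 * (if k = 0 then (1 : ℝ) else 0)))
          (fun k => (Real.exp_pos _).le) (summ2 hlam0 v.1 v.2)).1
    have hfun : psi2 μ (fun ω => (X ω : ℝ)) (fun ω => if X ω = 0 then (1 : ℝ) else 0) =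
        fun v : ℝ × ℝ => -lam + Real.log (Real.exp (lam * Real.exp v.1) - 1 + Real.exp v.2) :=
      funext fun v => hpsi2 v.1 v.2
    refine ⟨?_, ?_, ?_⟩
    · rw [hdom2, interior_univ]; exact univ_nonempty
    · intro v _
      rw [hfun]
      have hT : Real.exp (lam * Real.exp v.1) - 1 + Real.exp v.2 ≠ 0 := by
        have h1 := Real.one_le_exp (show 0 ≤ lam * Real.exp v.1 by positivity)
        have h2 := Real.exp_pos v.2
        exact ne_of_gt (by linarith)
      have d1 : DifferentiableAt ℝ
          (fun w : ℝ × ℝ => Real.exp (lam * Real.exp w.1) - 1 + Real.exp w.2) v :=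
        (((differentiableAt_fst.exp.const_mul lam).exp).sub_const 1).add differentiableAt_snd.exp
      exact (d1.log hT).const_add _
    · intro c hc
      rw [hdom2, frontier_univ] at hc
      exact absurd hc (notMem_empty c)
end
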